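/- For all ξ in ℂ \ ℝ≤0 one has |d/dξ (K₁(ξ)/ξ)| ≤ e^{-Re ξ} ( 2^{3/2}/|ξ|³ + 2√π |ξ|^{-3/2} ). -/

import Mathlib

open Complex MeasureTheory

/-- The modified Bessel function of the second kind of order one on `ℂ \ ℝ≤0`,
given by `K₁(ξ) = (e^{-ξ}/ξ) ∫₀^∞ e^{-t} √(t² + 2ξt) dt` (principal square root). -/
noncomputable def K1 (ξ : ℂ) : ℂ :=
  (Complex.exp (-ξ) / ξ) *
    ∫ t in Set.Ioi (0 : ℝ), Complex.exp (-(t : ℂ)) * ((t : ℂ) ^ 2 + 2 * ξ * t) ^ ((1 : ℂ) / 2)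

namespace K1aux

open Set Metric Real Filter

noncomputable def w (z : ℂ) (t : ℝ) : ℂ := (t : ℂ) ^ 2 + 2 * z * t

noncomputable def G (z : ℂ) : ℂ := ∫ t in Set.Ioi (0 : ℝ), Complex.exp (-(t : ℂ)) * (w z t) ^ ((1 : ℂ) / 2)

noncomputable def dl (ξ : ℂ) : ℝ := if ξ.im = 0 then ξ.re else |ξ.im|

lemma dl_pos {ξ : ℂ} (hξ : ξ ∈ Complex.slitPlane) : 0 < dl ξ := by
  rw [Complex.mem_slitPlane_iff] at hξ
  unfold dl
  rcases hξ with h | h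
  · by_cases him : ξ.im = 0 <;> simp [him, h, abs_pos]
  · simp [h, abs_pos]

lemma norm_add_real_ge {ξ : ℂ} (hξ : ξ ∈ Complex.slitPlane) {t : ℝ} (ht : 0 ≤ t) :
    dl ξ ≤ ‖ξ + (t : ℂ)‖ := by
  unfold dl
  by_cases him : ξ.im = 0
  · simp only [him, if_true]
    calc ξ.re ≤ ξ.re + t := by linarith
    _ = (ξ + (t : ℂ)).re := by simp
    _ ≤ |(ξ + (t : ℂ)).re| := le_abs_self _
    _ ≤ ‖ξ + (t : ℂ)‖ := Complex.abs_re_le_norm _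
  · simp only [him, if_false]
    calc |ξ.im| = |(ξ + (t : ℂ)).im| := by simp
    _ ≤ ‖ξ + (t : ℂ)‖ := Complex.abs_im_le_norm _

lemma w_factor (z : ℂ) (t : ℝ) : w z t = 2 * (t : ℂ) * ((t : ℂ) / 2 + z) := by
  unfold w; ring

lemma norm_w_ge {ξ : ℂ} (hξ : ξ ∈ Complex.slitPlane) {z : ℂ}
    (hz : z ∈ closedBall ξ (dl ξ / 2)) {t : ℝ} (ht : 0 < t) :
    dl ξ * t ≤ ‖w z t‖ := by
  have h1 : ‖ξ + ((t : ℂ) / 2)‖ - ‖z - ξ‖ ≤ ‖(t : ℂ) / 2 + z‖ := by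
    have := norm_sub_norm_le (ξ + ((t : ℂ) / 2)) (ξ - z)
    calc ‖ξ + ((t : ℂ) / 2)‖ - ‖z - ξ‖ = ‖ξ + ((t : ℂ) / 2)‖ - ‖ξ - z‖ := by
          rw [norm_sub_rev]
      _ ≤ ‖ξ + ((t : ℂ) / 2) - (ξ - z)‖ := norm_sub_norm_le _ _
      _ = ‖(t : ℂ) / 2 + z‖ := by ring_nf
  have h2 : dl ξ ≤ ‖ξ + ((t : ℂ) / 2)‖ := by
    have : ((t / 2 : ℝ) : ℂ) = (t : ℂ) / 2 := by push_cast; ring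
    rw [← this]
    exact norm_add_real_ge hξ (by linarith)
  have h3 : ‖z - ξ‖ ≤ dl ξ / 2 := by
    rw [mem_closedBall, dist_eq_norm] at hz; exact hz
  have h4 : dl ξ / 2 ≤ ‖(t : ℂ) / 2 + z‖ := by linarith
  calc dl ξ * t = (2 * t) * (dl ξ / 2) := by ring
    _ ≤ (2 * t) * ‖(t : ℂ) / 2 + z‖ := by
        apply mul_le_mul_of_nonneg_left h4 (by linarith)
    _ = ‖2 * (t : ℂ)‖ * ‖(t : ℂ) / 2 + z‖ := by
        rw [norm_mul]
        simp [Complex.norm_real, abs_of_pos ht, Complex.norm_ofNat]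
    _ = ‖w z t‖ := by rw [← norm_mul, ← w_factor]

lemma w_mem_slit {ξ : ℂ} (hξ : ξ ∈ Complex.slitPlane) {z : ℂ}
    (hz : z ∈ closedBall ξ (dl ξ / 2)) {t : ℝ} (ht : 0 < t) :
    w z t ∈ Complex.slitPlane := by
  rw [Complex.mem_slitPlane_iff]
  by_cases hzim : z.im = 0
  · left
    have h3 : ‖z - ξ‖ ≤ dl ξ / 2 := by
      rw [mem_closedBall, dist_eq_norm] at hz; exact hz
    have hξim : ξ.im = 0 := by
      by_contra h
      have hdl : dl ξ = |ξ.im| := by unfold dl; simp [h]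
      have : |ξ.im| ≤ dl ξ / 2 := by
        calc |ξ.im| = |(z - ξ).im| := by simp [hzim, abs_sub_comm]
          _ ≤ ‖z - ξ‖ := Complex.abs_im_le_norm _
          _ ≤ dl ξ / 2 := h3
      rw [hdl] at this
      have := dl_pos hξ
      rw [hdl] at this
      linarith
    have hdl : dl ξ = ξ.re := by unfold dl; simp [hξim]
    have hre : ξ.re / 2 ≤ z.re := by
      have : |z.re - ξ.re| ≤ ‖z - ξ‖ := by
        have := Complex.abs_re_le_norm (z - ξ); simpa using this
      have h4 := abs_le.1 (this.trans h3)
      rw [hdl] at h4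
      linarith [h4.1]
    have hrepos : 0 < ξ.re := by rw [← hdl]; exact dl_pos hξ
    have : (w z t).re = t ^ 2 + 2 * z.re * t := by
      unfold w
      simp [Complex.add_re, Complex.mul_re, ← Complex.ofReal_pow]
    rw [this]
    nlinarith
  · right
    have : (w z t).im = 2 * z.im * t := by
      unfold w
      simp [Complex.add_im, Complex.mul_im, ← Complex.ofReal_pow]
    rw [this]
    positivity

lemma w_ne_zero {ξ : ℂ} (hξ : ξ ∈ Complex.slitPlane) {z : ℂ}
    (hz : z ∈ closedBall ξ (dl ξ / 2)) {t : ℝ} (ht : 0 < t) :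
    w z t ≠ 0 :=
  Complex.slitPlane_ne_zero (w_mem_slit hξ hz ht)

lemma norm_w_le {z : ℂ} {t : ℝ} (ht : 0 ≤ t) : ‖w z t‖ ≤ t ^ 2 + 2 * ‖z‖ * t := by
  unfold w
  calc ‖(t : ℂ) ^ 2 + 2 * z * t‖ ≤ ‖(t : ℂ) ^ 2‖ + ‖2 * z * (t : ℂ)‖ := norm_add_le _ _
    _ = t ^ 2 + 2 * ‖z‖ * t := by
        rw [norm_pow, norm_mul, norm_mul]
        simp [Complex.norm_real, _root_.abs_of_nonneg ht]

lemma norm_cpow_half (v : ℂ) : ‖v ^ ((1 : ℂ) / 2)‖ = ‖v‖ ^ ((1 : ℝ) / 2) := by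
  have : ((1 : ℂ) / 2) = (((1 : ℝ) / 2 : ℝ) : ℂ) := by norm_num
  rw [this]
  exact_mod_cast Complex.norm_cpow_real v (1 / 2)

lemma norm_cpow_neg_half (v : ℂ) : ‖v ^ ((1 : ℂ) / 2 - 1)‖ = ‖v‖ ^ (-(1 : ℝ) / 2) := by
  have : ((1 : ℂ) / 2 - 1) = ((-(1 : ℝ) / 2 : ℝ) : ℂ) := by norm_num
  rw [this]
  exact_mod_cast Complex.norm_cpow_real v (-(1) / 2)

lemma int_exp_rpow {p : ℝ} (hp : -1 < p) :
    IntegrableOn (fun t : ℝ => Real.exp (-t) * t ^ p) (Set.Ioi 0) := by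
  have := Real.GammaIntegral_convergent (by linarith : (0 : ℝ) < p + 1)
  simpa using this

lemma int_exp_pow (n : ℕ) :
    IntegrableOn (fun t : ℝ => Real.exp (-t) * t ^ n) (Set.Ioi 0) := by
  have h := int_exp_rpow (p := n) (lt_of_lt_of_le neg_one_lt_zero (Nat.cast_nonneg n))
  refine h.congr_fun (fun t ht => ?_) measurableSet_Ioi
  simp only [Real.rpow_natCast]

lemma norm_cexp (t : ℝ) : ‖Complex.exp (-(t : ℂ))‖ = Real.exp (-t) := by
  rw [Complex.norm_exp]
  simp

lemma contOn_cpow {ξ : ℂ} (hξ : ξ ∈ Complex.slitPlane) {z : ℂ}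
    (hz : z ∈ closedBall ξ (dl ξ / 2)) (c : ℂ) :
    ContinuousOn (fun t : ℝ => (w z t) ^ c) (Set.Ioi 0) := by
  intro t ht
  have hw : ContinuousAt (fun t : ℝ => w z t) t := by
    unfold w; fun_prop
  exact ((continuousAt_cpow_const (w_mem_slit hξ hz ht)).comp hw).continuousWithinAt

lemma measAux {ξ : ℂ} (hξ : ξ ∈ Complex.slitPlane) {z : ℂ}
    (hz : z ∈ closedBall ξ (dl ξ / 2)) (c : ℂ) {ψ : ℝ → ℂ} (hψ : Continuous ψ) :
    AEStronglyMeasurable (fun t : ℝ => ψ t * (w z t) ^ c)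
      ((volume : Measure ℝ).restrict (Set.Ioi 0)) :=
  (hψ.continuousOn.mul (contOn_cpow hξ hz c)).aestronglyMeasurable measurableSet_Ioi

lemma intW {ξ : ℂ} (hξ : ξ ∈ Complex.slitPlane) {z : ℂ}
    (hz : z ∈ closedBall ξ (dl ξ / 2)) (n : ℕ) :
    IntegrableOn (fun t : ℝ =>
      Complex.exp (-(t : ℂ)) * ((t : ℂ) ^ n * (w z t) ^ ((1 : ℂ) / 2))) (Set.Ioi 0) := by
  have hmeas : AEStronglyMeasurable
      (fun t : ℝ => Complex.exp (-(t : ℂ)) * ((t : ℂ) ^ n * (w z t) ^ ((1 : ℂ) / 2)))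
      ((volume : Measure ℝ).restrict (Set.Ioi 0)) := by
    have := measAux hξ hz ((1 : ℂ) / 2)
      (ψ := fun t : ℝ => Complex.exp (-(t : ℂ)) * (t : ℂ) ^ n) (by fun_prop)
    simpa [mul_assoc] using this
  have hgint : IntegrableOn
      (fun t : ℝ => Real.exp (-t) * t ^ (n + 1) + (2 * ‖z‖) * (Real.exp (-t) * t ^ n))
      (Set.Ioi 0) := (int_exp_pow (n + 1)).add ((int_exp_pow n).const_mul _)
  refine Integrable.mono' hgint hmeas ?_
  filter_upwards [ae_restrict_mem measurableSet_Ioi] with t ht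
  have ht' : (0 : ℝ) < t := ht
  have hwle : ‖w z t‖ ^ ((1 : ℝ) / 2) ≤ t + 2 * ‖z‖ := by
    have h1 : ‖w z t‖ ≤ (t + 2 * ‖z‖) ^ 2 := by
      have := norm_w_le (z := z) ht'.le
      nlinarith [norm_nonneg z, ht'.le]
    calc ‖w z t‖ ^ ((1 : ℝ) / 2) ≤ ((t + 2 * ‖z‖) ^ 2) ^ ((1 : ℝ) / 2) :=
          Real.rpow_le_rpow (norm_nonneg _) h1 (by norm_num)
      _ = t + 2 * ‖z‖ := by
          rw [← Real.sqrt_eq_rpow, Real.sqrt_sq (by positivity)]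
  calc ‖Complex.exp (-(t : ℂ)) * ((t : ℂ) ^ n * (w z t) ^ ((1 : ℂ) / 2))‖
      = Real.exp (-t) * (t ^ n * ‖w z t‖ ^ ((1 : ℝ) / 2)) := by
        rw [norm_mul, norm_mul, norm_cexp, norm_pow, norm_cpow_half]
        simp [Complex.norm_real, _root_.abs_of_nonneg ht'.le]
    _ ≤ Real.exp (-t) * (t ^ n * (t + 2 * ‖z‖)) := by
        have h2 : (0:ℝ) ≤ t ^ n := by positivity
        have := Real.exp_pos (-t)
        nlinarith [mul_le_mul_of_nonneg_left hwle h2]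
    _ = Real.exp (-t) * t ^ (n + 1) + (2 * ‖z‖) * (Real.exp (-t) * t ^ n) := by ring

lemma intV {ξ : ℂ} (hξ : ξ ∈ Complex.slitPlane) {z : ℂ}
    (hz : z ∈ closedBall ξ (dl ξ / 2)) (n : ℕ) :
    IntegrableOn (fun t : ℝ =>
      Complex.exp (-(t : ℂ)) * ((t : ℂ) ^ n * (w z t) ^ ((1 : ℂ) / 2 - 1))) (Set.Ioi 0) := by
  have hdl := dl_pos hξ
  have hmeas : AEStronglyMeasurable
      (fun t : ℝ => Complex.exp (-(t : ℂ)) * ((t : ℂ) ^ n * (w z t) ^ ((1 : ℂ) / 2 - 1)))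
      ((volume : Measure ℝ).restrict (Set.Ioi 0)) := by
    have := measAux hξ hz ((1 : ℂ) / 2 - 1)
      (ψ := fun t : ℝ => Complex.exp (-(t : ℂ)) * (t : ℂ) ^ n) (by fun_prop)
    simpa [mul_assoc] using this
  have hgint : IntegrableOn
      (fun t : ℝ => (dl ξ) ^ (-(1 : ℝ) / 2) * (Real.exp (-t) * t ^ ((n : ℝ) + (-(1 : ℝ) / 2))))
      (Set.Ioi 0) := by
    have hn : (-1 : ℝ) < (n : ℝ) + (-(1 : ℝ) / 2) := by
      have : (0:ℝ) ≤ (n:ℝ) := Nat.cast_nonneg n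
      linarith
    exact (int_exp_rpow hn).const_mul _
  refine Integrable.mono' hgint hmeas ?_
  filter_upwards [ae_restrict_mem measurableSet_Ioi] with t ht
  have ht' : (0 : ℝ) < t := ht
  have hwge := norm_w_ge hξ hz ht'
  have hwpos : (0 : ℝ) < dl ξ * t := by positivity
  have hkey : ‖w z t‖ ^ (-(1 : ℝ) / 2) ≤ (dl ξ * t) ^ (-(1 : ℝ) / 2) :=
    Real.rpow_le_rpow_of_nonpos hwpos hwge (by norm_num)
  calc ‖Complex.exp (-(t : ℂ)) * ((t : ℂ) ^ n * (w z t) ^ ((1 : ℂ) / 2 - 1))‖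
      = Real.exp (-t) * (t ^ n * ‖w z t‖ ^ (-(1 : ℝ) / 2)) := by
        rw [norm_mul, norm_mul, norm_cexp, norm_pow, norm_cpow_neg_half]
        simp [Complex.norm_real, _root_.abs_of_nonneg ht'.le]
    _ ≤ Real.exp (-t) * (t ^ n * ((dl ξ * t) ^ (-(1 : ℝ) / 2))) := by
        have h2 : (0:ℝ) ≤ t ^ n := by positivity
        have := (Real.exp_pos (-t)).le
        gcongr
    _ = (dl ξ) ^ (-(1 : ℝ) / 2) * (Real.exp (-t) * t ^ ((n : ℝ) + (-(1 : ℝ) / 2))) := by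
        rw [Real.mul_rpow hdl.le ht'.le, Real.rpow_add ht' (n : ℝ) (-(1:ℝ)/2),
          Real.rpow_natCast]
        ring

lemma norm_V_bound {ξ : ℂ} (hξ : ξ ∈ Complex.slitPlane) {z : ℂ}
    (hz : z ∈ closedBall ξ (dl ξ / 2)) {t : ℝ} (ht : 0 < t) :
    ‖(w z t) ^ ((1 : ℂ) / 2 - 1)‖ ≤ (dl ξ) ^ (-(1 : ℝ) / 2) * t ^ (-(1 : ℝ) / 2) := by
  have hdl := dl_pos hξ
  have hwge := norm_w_ge hξ hz ht
  have hwpos : (0 : ℝ) < dl ξ * t := by positivity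
  rw [norm_cpow_neg_half]
  calc ‖w z t‖ ^ (-(1 : ℝ) / 2) ≤ (dl ξ * t) ^ (-(1 : ℝ) / 2) :=
        Real.rpow_le_rpow_of_nonpos hwpos hwge (by norm_num)
    _ = (dl ξ) ^ (-(1 : ℝ) / 2) * t ^ (-(1 : ℝ) / 2) := Real.mul_rpow hdl.le ht.le

lemma hasDerivAt_G {ξ : ℂ} (hξ : ξ ∈ Complex.slitPlane) :
    HasDerivAt G (∫ t in Set.Ioi (0 : ℝ),
      Complex.exp (-(t : ℂ)) * ((1 / 2 : ℂ) * (w ξ t) ^ ((1 : ℂ) / 2 - 1) * (2 * (t : ℂ)))) ξ := by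
  have hdl := dl_pos hξ
  have hself : ξ ∈ closedBall ξ (dl ξ / 2) := mem_closedBall_self (by linarith)
  have hball : closedBall ξ (dl ξ / 2) ∈ nhds ξ := closedBall_mem_nhds ξ (by linarith)
  have main := hasDerivAt_integral_of_dominated_loc_of_deriv_le
    (μ := (volume : Measure ℝ).restrict (Set.Ioi 0))
    (F := fun z t => Complex.exp (-(t : ℂ)) * (w z t) ^ ((1 : ℂ) / 2))
    (F' := fun z t => Complex.exp (-(t : ℂ)) *
      ((1 / 2 : ℂ) * (w z t) ^ ((1 : ℂ) / 2 - 1) * (2 * (t : ℂ))))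
    (x₀ := ξ)
    (bound := fun t => (dl ξ) ^ (-(1 : ℝ) / 2) * (Real.exp (-t) * t ^ ((1 : ℝ) / 2)))
    (s := ball ξ (dl ξ / 2)) (ball_mem_nhds ξ (by linarith))
    ?_ ?_ ?_ ?_ ?_ ?_
  · exact main.2
  · -- measurability of F z for z near ξ
    filter_upwards [hball] with z hz
    exact measAux hξ hz ((1 : ℂ) / 2) (ψ := fun t : ℝ => Complex.exp (-(t : ℂ))) (by fun_prop)
  · -- integrability of F ξ
    have := intW hξ hself 0
    simpa using this.integrable
  · -- measurability of F' ξ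
    have h := measAux hξ hself ((1 : ℂ) / 2 - 1)
      (ψ := fun t : ℝ => Complex.exp (-(t : ℂ)) * (t : ℂ)) (by fun_prop)
    have heq : (fun t : ℝ => Complex.exp (-(t : ℂ)) *
        ((1 / 2 : ℂ) * (w ξ t) ^ ((1 : ℂ) / 2 - 1) * (2 * (t : ℂ)))) =
        fun t : ℝ => (Complex.exp (-(t : ℂ)) * (t : ℂ)) * (w ξ t) ^ ((1 : ℂ) / 2 - 1) := by
      funext t; ring
    show AEStronglyMeasurable (fun t : ℝ => Complex.exp (-(t : ℂ)) *
        ((1 / 2 : ℂ) * (w ξ t) ^ ((1 : ℂ) / 2 - 1) * (2 * (t : ℂ)))) _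
    rw [heq]
    exact h
  · -- uniform bound for F'
    filter_upwards [ae_restrict_mem measurableSet_Ioi] with t ht
    intro z hz
    have hz' : z ∈ closedBall ξ (dl ξ / 2) := ball_subset_closedBall hz
    have ht' : (0 : ℝ) < t := ht
    have hV := norm_V_bound hξ hz' ht'
    calc ‖Complex.exp (-(t : ℂ)) *
          ((1 / 2 : ℂ) * (w z t) ^ ((1 : ℂ) / 2 - 1) * (2 * (t : ℂ)))‖
        = Real.exp (-t) * (t * ‖(w z t) ^ ((1 : ℂ) / 2 - 1)‖) := by
          rw [norm_mul, norm_cexp, norm_mul, norm_mul, norm_mul]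
          simp [Complex.norm_real, _root_.abs_of_nonneg ht'.le]
          ring
      _ ≤ Real.exp (-t) * (t * ((dl ξ) ^ (-(1 : ℝ) / 2) * t ^ (-(1 : ℝ) / 2))) := by
          have := (Real.exp_pos (-t)).le
          gcongr
      _ = (dl ξ) ^ (-(1 : ℝ) / 2) * (Real.exp (-t) * (t ^ (1:ℝ) * t ^ (-(1 : ℝ) / 2))) := by
          rw [Real.rpow_one]; ring
      _ = (dl ξ) ^ (-(1 : ℝ) / 2) * (Real.exp (-t) * t ^ ((1 : ℝ) / 2)) := by
          rw [← Real.rpow_add ht']; norm_num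
  · -- integrability of the bound
    exact (int_exp_rpow (by norm_num : (-1 : ℝ) < 1 / 2)).const_mul _
  · -- differentiability in z
    filter_upwards [ae_restrict_mem measurableSet_Ioi] with t ht
    intro z hz
    have hz' : z ∈ closedBall ξ (dl ξ / 2) := ball_subset_closedBall hz
    have ht' : (0 : ℝ) < t := ht
    have hw : HasDerivAt (fun z : ℂ => w z t) (2 * (t : ℂ)) z := by
      have h1 : HasDerivAt (fun z : ℂ => (t : ℂ) ^ 2 + 2 * (t : ℂ) * z)
          (2 * (t : ℂ)) z := by
        simpa using ((hasDerivAt_id z).const_mul (2 * (t : ℂ))).const_add ((t : ℂ) ^ 2)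
      have : (fun z : ℂ => (t : ℂ) ^ 2 + 2 * (t : ℂ) * z) = fun z : ℂ => w z t := by
        funext z; unfold w; ring
      rwa [this] at h1
    exact (hw.cpow_const (w_mem_slit hξ hz' ht')).const_mul _

lemma ftc {ξ : ℂ} (hξ : ξ ∈ Complex.slitPlane) :
    ∫ t in Set.Ioi (0 : ℝ),
      (Complex.exp (-(t : ℂ)) * ((t : ℂ) ^ 0 * (w ξ t) ^ ((1 : ℂ) / 2))
        - Complex.exp (-(t : ℂ)) * ((t : ℂ) ^ 1 * (w ξ t) ^ ((1 : ℂ) / 2))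
        + Complex.exp (-(t : ℂ)) * ((t : ℂ) ^ 2 * (w ξ t) ^ ((1 : ℂ) / 2 - 1))
        + ξ * (Complex.exp (-(t : ℂ)) * ((t : ℂ) ^ 1 * (w ξ t) ^ ((1 : ℂ) / 2 - 1)))) = 0 := by
  have hdl := dl_pos hξ
  have hself : ξ ∈ closedBall ξ (dl ξ / 2) := mem_closedBall_self (by linarith)
  set φ : ℝ → ℂ := fun t => Complex.exp (-(t : ℂ)) * ((t : ℂ) * (w ξ t) ^ ((1 : ℂ) / 2)) with hφ
  set φ' : ℝ → ℂ := fun t =>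
      Complex.exp (-(t : ℂ)) * ((t : ℂ) ^ 0 * (w ξ t) ^ ((1 : ℂ) / 2))
        - Complex.exp (-(t : ℂ)) * ((t : ℂ) ^ 1 * (w ξ t) ^ ((1 : ℂ) / 2))
        + Complex.exp (-(t : ℂ)) * ((t : ℂ) ^ 2 * (w ξ t) ^ ((1 : ℂ) / 2 - 1))
        + ξ * (Complex.exp (-(t : ℂ)) * ((t : ℂ) ^ 1 * (w ξ t) ^ ((1 : ℂ) / 2 - 1))) with hφ'
  have hderiv : ∀ t ∈ Set.Ioi (0 : ℝ), HasDerivAt φ (φ' t) t := by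
    intro t ht
    have ht' : (0 : ℝ) < t := ht
    have hA : HasDerivAt (fun s : ℝ => Complex.exp (-(s : ℂ))) (-Complex.exp (-(t : ℂ))) t := by
      have h1 : HasDerivAt (fun u : ℂ => Complex.exp (-u))
          (Complex.exp (-(t : ℂ)) * (-1)) (t : ℂ) :=
        (Complex.hasDerivAt_exp (-(t : ℂ))).comp (t : ℂ)
          (hasDerivAt_neg (t : ℂ))
      simpa using h1.comp_ofReal
    have hB : HasDerivAt (fun s : ℝ => ((s : ℂ))) 1 t := (hasDerivAt_id ((t : ℂ))).comp_ofReal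
    have hC : HasDerivAt (fun s : ℝ => (w ξ s) ^ ((1 : ℂ) / 2))
        ((1 / 2 : ℂ) * (w ξ t) ^ ((1 : ℂ) / 2 - 1) * (2 * (t : ℂ) + 2 * ξ)) t := by
      have hwc : HasDerivAt (fun u : ℂ => u ^ 2 + 2 * ξ * u) (2 * (t : ℂ) + 2 * ξ) (t : ℂ) := by
        have := (hasDerivAt_pow 2 ((t : ℂ))).add (((hasDerivAt_id ((t : ℂ)))).const_mul (2 * ξ))
        refine this.congr_deriv ?_
        ring
      have hmem : ((t : ℂ)) ^ 2 + 2 * ξ * (t : ℂ) ∈ Complex.slitPlane := by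
        have := w_mem_slit hξ hself ht'
        unfold w at this
        exact this
      exact (hwc.cpow_const (c := (1 : ℂ) / 2) hmem).comp_ofReal
    have hres := hA.mul (hB.mul hC)
    have : HasDerivAt φ
        (-Complex.exp (-(t : ℂ)) * ((t : ℂ) * (w ξ t) ^ ((1 : ℂ) / 2)) +
          Complex.exp (-(t : ℂ)) * (1 * (w ξ t) ^ ((1 : ℂ) / 2) +
            (t : ℂ) * ((1 / 2 : ℂ) * (w ξ t) ^ ((1 : ℂ) / 2 - 1) * (2 * (t : ℂ) + 2 * ξ)))) t := hres
    convert this using 1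
    rw [hφ']
    ring
  have hcont : ContinuousWithinAt φ (Set.Ici (0 : ℝ)) 0 := by
    have hφ0 : φ 0 = 0 := by simp [hφ]
    rw [ContinuousWithinAt, hφ0]
    apply squeeze_zero_norm (a := fun t : ℝ =>
      Real.exp (-t) * (|t| * Real.sqrt (t ^ 2 + 2 * ‖ξ‖ * |t|)))
    · intro t
      have hb : ‖w ξ t‖ ≤ t ^ 2 + 2 * ‖ξ‖ * |t| := by
        unfold w
        calc ‖(t : ℂ) ^ 2 + 2 * ξ * t‖ ≤ ‖(t : ℂ) ^ 2‖ + ‖2 * ξ * (t : ℂ)‖ := norm_add_le _ _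
          _ = t ^ 2 + 2 * ‖ξ‖ * |t| := by
              rw [norm_pow, norm_mul, norm_mul]
              simp [Complex.norm_real, Complex.norm_ofNat, _root_.sq_abs]
      calc ‖φ t‖ = Real.exp (-t) * (|t| * ‖w ξ t‖ ^ ((1:ℝ)/2)) := by
            rw [hφ]
            simp only [norm_mul, norm_cexp, norm_cpow_half, Complex.norm_real,
              Real.norm_eq_abs]
        _ ≤ Real.exp (-t) * (|t| * Real.sqrt (t ^ 2 + 2 * ‖ξ‖ * |t|)) := by
            rw [← Real.sqrt_eq_rpow]
            have : Real.sqrt ‖w ξ t‖ ≤ Real.sqrt (t ^ 2 + 2 * ‖ξ‖ * |t|) :=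
              Real.sqrt_le_sqrt hb
            have he := (Real.exp_pos (-t)).le
            have ha : (0:ℝ) ≤ |t| := abs_nonneg t
            gcongr
    · have hcg : Continuous (fun t : ℝ =>
          Real.exp (-t) * (|t| * Real.sqrt (t ^ 2 + 2 * ‖ξ‖ * |t|))) := by fun_prop
      have h0 : (fun t : ℝ => Real.exp (-t) * (|t| * Real.sqrt (t ^ 2 + 2 * ‖ξ‖ * |t|))) 0
          = 0 := by simp
      have h2 := (hcg.tendsto 0).mono_left (nhdsWithin_le_nhds (s := Set.Ici (0:ℝ)))
      simpa using h2
  have htend : Filter.Tendsto φ atTop (nhds 0) := by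
    apply squeeze_zero_norm' (a := fun t : ℝ =>
      Real.exp (-t) * t ^ 2 + (2 * ‖ξ‖) * (Real.exp (-t) * t))
    · filter_upwards [Filter.eventually_ge_atTop (0 : ℝ)] with t ht
      have hwle : ‖w ξ t‖ ^ ((1 : ℝ) / 2) ≤ t + 2 * ‖ξ‖ := by
        have h1 : ‖w ξ t‖ ≤ (t + 2 * ‖ξ‖) ^ 2 := by
          have := norm_w_le (z := ξ) ht
          nlinarith [norm_nonneg ξ]
        calc ‖w ξ t‖ ^ ((1 : ℝ) / 2) ≤ ((t + 2 * ‖ξ‖) ^ 2) ^ ((1 : ℝ) / 2) :=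
              Real.rpow_le_rpow (norm_nonneg _) h1 (by norm_num)
          _ = t + 2 * ‖ξ‖ := by
              rw [← Real.sqrt_eq_rpow, Real.sqrt_sq (by positivity)]
      calc ‖φ t‖ = Real.exp (-t) * (t * ‖w ξ t‖ ^ ((1:ℝ)/2)) := by
            rw [hφ]
            simp only [norm_mul, norm_cexp, norm_cpow_half, Complex.norm_real,
              Real.norm_eq_abs]
            rw [_root_.abs_of_nonneg ht]
        _ ≤ Real.exp (-t) * (t * (t + 2 * ‖ξ‖)) := by
            have he := (Real.exp_pos (-t)).le
            gcongr
        _ = Real.exp (-t) * t ^ 2 + (2 * ‖ξ‖) * (Real.exp (-t) * t) := by ring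
    · have l1 : Filter.Tendsto (fun t : ℝ => Real.exp (-t) * t ^ 2) atTop (nhds 0) := by
        have := tendsto_pow_mul_exp_neg_atTop_nhds_zero 2
        refine this.congr (fun t => ?_)
        ring
      have l2 : Filter.Tendsto (fun t : ℝ => Real.exp (-t) * t) atTop (nhds 0) := by
        have := tendsto_pow_mul_exp_neg_atTop_nhds_zero 1
        refine this.congr (fun t => ?_)
        ring
      have := l1.add (l2.const_mul (2 * ‖ξ‖))
      simpa using this
  have f'int : IntegrableOn φ' (Set.Ioi (0 : ℝ)) := by
    refine (((intW hξ hself 0).sub (intW hξ hself 1)).add (intV hξ hself 2)).add ?_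
    exact (intV hξ hself 1).const_mul ξ
  have hres := MeasureTheory.integral_Ioi_of_hasDerivAt_of_tendsto hcont hderiv f'int htend
  have hφ0 : φ 0 = 0 := by simp [hφ]
  rw [hφ0, sub_zero] at hres
  exact hres

lemma rpow32 {a b : ℝ} (ha : 0 ≤ a) (hb : 0 ≤ b) :
    (a + b) ^ ((3 : ℝ) / 2) ≤ 2 ^ ((1 : ℝ) / 2) * (a ^ ((3 : ℝ) / 2) + b ^ ((3 : ℝ) / 2)) := by
  have h := NNReal.rpow_add_le_mul_rpow_add_rpow (a.toNNReal) (b.toNNReal)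
    (p := (3 : ℝ) / 2) (by norm_num)
  have h2 := NNReal.coe_le_coe.2 h
  push_cast [Real.coe_toNNReal _ ha, Real.coe_toNNReal _ hb] at h2
  norm_num at h2
  convert h2 using 3

lemma integral_exp_t2 : ∫ t in Set.Ioi (0 : ℝ), Real.exp (-t) * t ^ (2 : ℕ) = 2 := by
  have h := Real.Gamma_eq_integral (by norm_num : (0 : ℝ) < 3)
  have h2 : Real.Gamma 3 = 2 := by
    rw [show (3 : ℝ) = (2 : ℕ) + 1 by norm_num, Real.Gamma_nat_eq_factorial]
    norm_num
  calc ∫ t in Set.Ioi (0 : ℝ), Real.exp (-t) * t ^ (2 : ℕ)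
      = ∫ t in Set.Ioi (0 : ℝ), Real.exp (-t) * t ^ ((3 : ℝ) - 1) := by
        refine setIntegral_congr_fun measurableSet_Ioi (fun t ht => ?_)
        rw [show (3 : ℝ) - 1 = ((2 : ℕ) : ℝ) by norm_num, Real.rpow_natCast]
    _ = 2 := by rw [← h, h2]

lemma integral_exp_sqrt :
    ∫ t in Set.Ioi (0 : ℝ), Real.exp (-t) * t ^ ((1 : ℝ) / 2) = Real.sqrt Real.pi / 2 := by
  have h := Real.Gamma_eq_integral (by norm_num : (0 : ℝ) < 3 / 2)
  have h2 : Real.Gamma (3 / 2) = Real.sqrt Real.pi / 2 := by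
    have ha := Real.Gamma_add_one (s := 1 / 2) (by norm_num)
    rw [Real.Gamma_one_half_eq] at ha
    norm_num at ha
    rw [ha]
    ring
  rw [h2] at h
  rw [show ((1 : ℝ) / 2) = (3 : ℝ) / 2 - 1 by norm_num]
  exact h.symm

end K1aux

/-- For all `ξ ∈ ℂ \ ℝ≤0`,
`|d/dξ (K₁(ξ)/ξ)| ≤ e^{-Re ξ} (2^{3/2}/|ξ|³ + 2√π |ξ|^{-3/2})`. -/
theorem deriv_K1_div_upper_bound (ξ : ℂ) (hξ : ξ ∈ Complex.slitPlane) :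
    ‖deriv (fun z : ℂ => K1 z / z) ξ‖ ≤
      Real.exp (-ξ.re) *
        ((2 : ℝ) ^ ((3 : ℝ) / 2) / ‖ξ‖ ^ 3 + 2 * Real.sqrt Real.pi * ‖ξ‖ ^ (-(3 : ℝ) / 2)) := by
  classical
  open K1aux in
  have hdl := dl_pos hξ
  have hself : ξ ∈ Metric.closedBall ξ (dl ξ / 2) := Metric.mem_closedBall_self (by linarith)
  have hξ0 : ξ ≠ 0 := Complex.slitPlane_ne_zero hξ
  have hcpos : (0 : ℝ) < ‖ξ‖ := norm_pos_iff.2 hξ0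
  set c : ℝ := ‖ξ‖ with hc
  set E : ℂ := Complex.exp (-ξ) with hE
  -- the four basic integrals
  set IA : ℂ := ∫ t in Set.Ioi (0 : ℝ),
    Complex.exp (-(t : ℂ)) * ((t : ℂ) ^ 0 * (w ξ t) ^ ((1 : ℂ) / 2)) with hIA
  set IB : ℂ := ∫ t in Set.Ioi (0 : ℝ),
    Complex.exp (-(t : ℂ)) * ((t : ℂ) ^ 1 * (w ξ t) ^ ((1 : ℂ) / 2)) with hIB
  set IC : ℂ := ∫ t in Set.Ioi (0 : ℝ),
    Complex.exp (-(t : ℂ)) * ((t : ℂ) ^ 2 * (w ξ t) ^ ((1 : ℂ) / 2 - 1)) with hIC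
  set ID : ℂ := ∫ t in Set.Ioi (0 : ℝ),
    Complex.exp (-(t : ℂ)) * ((t : ℂ) ^ 1 * (w ξ t) ^ ((1 : ℂ) / 2 - 1)) with hID
  have iA := intW hξ hself 0
  have iB := intW hξ hself 1
  have iC := intV hξ hself 2
  have iD := intV hξ hself 1
  have iAB : IntegrableOn (fun t : ℝ =>
      Complex.exp (-(t : ℂ)) * ((t : ℂ) ^ 0 * (w ξ t) ^ ((1 : ℂ) / 2)) -
        Complex.exp (-(t : ℂ)) * ((t : ℂ) ^ 1 * (w ξ t) ^ ((1 : ℂ) / 2))) (Set.Ioi 0) :=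
    iA.sub iB
  have iABC : IntegrableOn (fun t : ℝ =>
      Complex.exp (-(t : ℂ)) * ((t : ℂ) ^ 0 * (w ξ t) ^ ((1 : ℂ) / 2)) -
        Complex.exp (-(t : ℂ)) * ((t : ℂ) ^ 1 * (w ξ t) ^ ((1 : ℂ) / 2)) +
        Complex.exp (-(t : ℂ)) * ((t : ℂ) ^ 2 * (w ξ t) ^ ((1 : ℂ) / 2 - 1))) (Set.Ioi 0) :=
    iAB.add iC
  -- split the FTC integral
  have key : IA - IB + IC + ξ * ID = 0 := by
    have h := ftc hξ
    rw [integral_add iABC (iD.const_mul ξ), integral_add iAB iC, integral_sub iA iB,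
      integral_const_mul] at h
    exact h
  -- pointwise identity  t²V = W - 2ξ t V  under the integral
  have hC_eq : IC = IA - 2 * ξ * ID := by
    have hpt : ∀ t ∈ Set.Ioi (0 : ℝ),
        Complex.exp (-(t : ℂ)) * ((t : ℂ) ^ 2 * (w ξ t) ^ ((1 : ℂ) / 2 - 1)) =
          Complex.exp (-(t : ℂ)) * ((t : ℂ) ^ 0 * (w ξ t) ^ ((1 : ℂ) / 2)) -
            2 * ξ * (Complex.exp (-(t : ℂ)) * ((t : ℂ) ^ 1 * (w ξ t) ^ ((1 : ℂ) / 2 - 1))) := by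
      intro t ht
      have hwne : w ξ t ≠ 0 := w_ne_zero hξ hself ht
      have hWV : w ξ t * (w ξ t) ^ ((1 : ℂ) / 2 - 1) = (w ξ t) ^ ((1 : ℂ) / 2) := by
        rw [Complex.cpow_sub _ _ hwne, Complex.cpow_one]
        field_simp
      have hw2 : ((t : ℂ)) ^ 2 = w ξ t - 2 * ξ * (t : ℂ) := by unfold w; ring
      linear_combination (Complex.exp (-(t : ℂ)) * (w ξ t) ^ ((1 : ℂ) / 2 - 1)) * hw2 +
        Complex.exp (-(t : ℂ)) * hWV
    calc IC = ∫ t in Set.Ioi (0 : ℝ),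
          (Complex.exp (-(t : ℂ)) * ((t : ℂ) ^ 0 * (w ξ t) ^ ((1 : ℂ) / 2)) -
            2 * ξ * (Complex.exp (-(t : ℂ)) * ((t : ℂ) ^ 1 * (w ξ t) ^ ((1 : ℂ) / 2 - 1)))) := by
          rw [hIC]
          exact setIntegral_congr_fun measurableSet_Ioi hpt
      _ = IA - 2 * ξ * ID := by
          rw [integral_sub iA (iD.const_mul (2 * ξ)), integral_const_mul]
  have hrel : ξ * ID = 2 * IA - IB := by
    have : IA - IB + (IA - 2 * ξ * ID) + ξ * ID = 0 := by rw [← hC_eq]; exact key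
    linear_combination -this
  -- derivative of G
  have HD := hasDerivAt_G hξ
  set GD : ℂ := ∫ t in Set.Ioi (0 : ℝ),
    Complex.exp (-(t : ℂ)) * ((1 / 2 : ℂ) * (w ξ t) ^ ((1 : ℂ) / 2 - 1) * (2 * (t : ℂ))) with hGDd
  have hGD : GD = ID := by
    rw [hGDd, hID]
    congr 1
    funext t
    ring
  have hGA : G ξ = IA := by
    rw [hIA]
    unfold G
    congr 1
    funext t
    ring
  -- derivative of the full function
  have hexp : HasDerivAt (fun z : ℂ => Complex.exp (-z)) (-E) ξ := by
    have h1 := (Complex.hasDerivAt_exp (-ξ)).comp ξ ((hasDerivAt_id ξ).neg)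
    simpa [hE, Function.comp_def] using h1
  have hu : HasDerivAt (fun z : ℂ => Complex.exp (-z) * G z) (-E * G ξ + E * GD) ξ :=
    hexp.mul HD
  have hv : HasDerivAt (fun z : ℂ => z ^ 2) (2 * ξ) ξ := by
    simpa using hasDerivAt_pow 2 ξ
  have hdiv : HasDerivAt (fun z : ℂ => Complex.exp (-z) * G z / z ^ 2)
      (((-E * G ξ + E * GD) * ξ ^ 2 - E * G ξ * (2 * ξ)) / (ξ ^ 2) ^ 2) ξ :=
    hu.div hv (pow_ne_zero 2 hξ0)
  have hfun : (fun z : ℂ => K1 z / z) = fun z : ℂ => Complex.exp (-z) * G z / z ^ 2 := by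
    funext z
    show (Complex.exp (-z) / z * _) / z = _
    rw [div_mul_eq_mul_div, div_div, ← sq]
    rfl
  have hderiv_eq : deriv (fun z : ℂ => K1 z / z) ξ =
      ((-E * G ξ + E * GD) * ξ ^ 2 - E * G ξ * (2 * ξ)) / (ξ ^ 2) ^ 2 := by
    rw [hfun]
    exact hdiv.deriv
  have hval : deriv (fun z : ℂ => K1 z / z) ξ = -(E * (IB + ξ * IA)) / ξ ^ 3 := by
    rw [hderiv_eq, hGA, hGD]
    rw [div_eq_div_iff (by exact pow_ne_zero 2 (pow_ne_zero 2 hξ0)) (pow_ne_zero 3 hξ0)]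
    linear_combination (E * ξ ^ 4) * hrel
  -- rewrite the numerator as a single integral
  have hJ : IB + ξ * IA = ∫ t in Set.Ioi (0 : ℝ),
      Complex.exp (-(t : ℂ)) * (((t : ℂ) + ξ) * (w ξ t) ^ ((1 : ℂ) / 2)) := by
    have : (fun t : ℝ => Complex.exp (-(t : ℂ)) * (((t : ℂ) + ξ) * (w ξ t) ^ ((1 : ℂ) / 2))) =
        fun t : ℝ => Complex.exp (-(t : ℂ)) * ((t : ℂ) ^ 1 * (w ξ t) ^ ((1 : ℂ) / 2)) +
          ξ * (Complex.exp (-(t : ℂ)) * ((t : ℂ) ^ 0 * (w ξ t) ^ ((1 : ℂ) / 2))) := by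
      funext t; ring
    rw [this, integral_add iB (iA.const_mul ξ), integral_const_mul, ← hIA, ← hIB]
  -- bound the integral
  have gint : IntegrableOn (fun t : ℝ =>
      2 ^ ((1 : ℝ) / 2) * (Real.exp (-t) * t ^ (2 : ℕ)) +
        (4 * c ^ ((3 : ℝ) / 2)) * (Real.exp (-t) * t ^ ((1 : ℝ) / 2))) (Set.Ioi 0) :=
    ((int_exp_pow 2).const_mul _).add
      ((int_exp_rpow (by norm_num : (-1 : ℝ) < 1 / 2)).const_mul _)
  have hptb : ∀ᵐ (t : ℝ) ∂((volume : Measure ℝ).restrict (Set.Ioi 0)),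
      ‖Complex.exp (-(t : ℂ)) * (((t : ℂ) + ξ) * (w ξ t) ^ ((1 : ℂ) / 2))‖ ≤
        2 ^ ((1 : ℝ) / 2) * (Real.exp (-t) * t ^ (2 : ℕ)) +
          (4 * c ^ ((3 : ℝ) / 2)) * (Real.exp (-t) * t ^ ((1 : ℝ) / 2)) := by
    filter_upwards [ae_restrict_mem measurableSet_Ioi] with t ht
    have ht' : (0 : ℝ) < t := ht
    have h1 : ‖(t : ℂ) + ξ‖ ≤ t + 2 * c := by
      calc ‖(t : ℂ) + ξ‖ ≤ ‖(t : ℂ)‖ + ‖ξ‖ := norm_add_le _ _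
        _ = t + c := by rw [Complex.norm_real, Real.norm_eq_abs, _root_.abs_of_nonneg ht'.le]
        _ ≤ t + 2 * c := by linarith
    have h2 : ‖w ξ t‖ ^ ((1 : ℝ) / 2) ≤ t ^ ((1 : ℝ) / 2) * (t + 2 * c) ^ ((1 : ℝ) / 2) := by
      calc ‖w ξ t‖ ^ ((1 : ℝ) / 2) ≤ (t * (t + 2 * c)) ^ ((1 : ℝ) / 2) := by
            apply Real.rpow_le_rpow (norm_nonneg _) _ (by norm_num)
            have := norm_w_le (z := ξ) ht'.le
            nlinarith
        _ = t ^ ((1 : ℝ) / 2) * (t + 2 * c) ^ ((1 : ℝ) / 2) :=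
            Real.mul_rpow ht'.le (by positivity)
    have h3 : (t + 2 * c) * (t + 2 * c) ^ ((1 : ℝ) / 2) = (t + 2 * c) ^ ((3 : ℝ) / 2) := by
      rw [show (t + 2 * c) * (t + 2 * c) ^ ((1 : ℝ) / 2) =
        (t + 2 * c) ^ ((1 : ℝ)) * (t + 2 * c) ^ ((1 : ℝ) / 2) by rw [Real.rpow_one],
        ← Real.rpow_add (by positivity)]
      norm_num
    have h4 : (t + 2 * c) ^ ((3 : ℝ) / 2) ≤
        2 ^ ((1 : ℝ) / 2) * (t ^ ((3 : ℝ) / 2) + (2 * c) ^ ((3 : ℝ) / 2)) :=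
      rpow32 ht'.le (by positivity)
    calc ‖Complex.exp (-(t : ℂ)) * (((t : ℂ) + ξ) * (w ξ t) ^ ((1 : ℂ) / 2))‖
        = Real.exp (-t) * (‖(t : ℂ) + ξ‖ * ‖w ξ t‖ ^ ((1 : ℝ) / 2)) := by
          rw [norm_mul, norm_cexp, norm_mul, norm_cpow_half]
      _ ≤ Real.exp (-t) * ((t + 2 * c) * (t ^ ((1 : ℝ) / 2) * (t + 2 * c) ^ ((1 : ℝ) / 2))) := by
          have he := (Real.exp_pos (-t)).le
          have hn1 : (0:ℝ) ≤ ‖(t : ℂ) + ξ‖ := norm_nonneg _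
          have hn2 : (0:ℝ) ≤ ‖w ξ t‖ ^ ((1 : ℝ) / 2) := by positivity
          gcongr
      _ = Real.exp (-t) * (t ^ ((1 : ℝ) / 2) * (t + 2 * c) ^ ((3 : ℝ) / 2)) := by
          rw [← h3]; ring
      _ ≤ Real.exp (-t) * (t ^ ((1 : ℝ) / 2) *
            (2 ^ ((1 : ℝ) / 2) * (t ^ ((3 : ℝ) / 2) + (2 * c) ^ ((3 : ℝ) / 2)))) := by
          have he := (Real.exp_pos (-t)).le
          have hn : (0:ℝ) ≤ t ^ ((1 : ℝ) / 2) := by positivity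
          gcongr
      _ = 2 ^ ((1 : ℝ) / 2) * (Real.exp (-t) * t ^ (2 : ℕ)) +
            (4 * c ^ ((3 : ℝ) / 2)) * (Real.exp (-t) * t ^ ((1 : ℝ) / 2)) := by
          have e1 : t ^ ((1 : ℝ) / 2) * t ^ ((3 : ℝ) / 2) = t ^ (2 : ℕ) := by
            rw [← Real.rpow_add ht', ← Real.rpow_natCast t 2]
            norm_num
          have e2 : (2 * c) ^ ((3 : ℝ) / 2) = 2 ^ ((3 : ℝ) / 2) * c ^ ((3 : ℝ) / 2) :=
            Real.mul_rpow (by norm_num) hcpos.le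
          have e3 : (2 : ℝ) ^ ((1 : ℝ) / 2) * 2 ^ ((3 : ℝ) / 2) = 4 := by
            rw [← Real.rpow_add (by norm_num : (0:ℝ) < 2)]
            norm_num
          linear_combination (2 ^ ((1:ℝ)/2) * Real.exp (-t)) * e1 +
            (2 ^ ((1:ℝ)/2) * Real.exp (-t) * t ^ ((1:ℝ)/2)) * e2 +
            (c ^ ((3:ℝ)/2) * Real.exp (-t) * t ^ ((1:ℝ)/2)) * e3
  have hJbound : ‖IB + ξ * IA‖ ≤
      2 ^ ((1 : ℝ) / 2) * 2 + (4 * c ^ ((3 : ℝ) / 2)) * (Real.sqrt Real.pi / 2) := by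
    rw [hJ]
    calc ‖∫ t in Set.Ioi (0 : ℝ),
          Complex.exp (-(t : ℂ)) * (((t : ℂ) + ξ) * (w ξ t) ^ ((1 : ℂ) / 2))‖
        ≤ ∫ t in Set.Ioi (0 : ℝ),
            (2 ^ ((1 : ℝ) / 2) * (Real.exp (-t) * t ^ (2 : ℕ)) +
              (4 * c ^ ((3 : ℝ) / 2)) * (Real.exp (-t) * t ^ ((1 : ℝ) / 2))) :=
          norm_integral_le_of_norm_le gint hptb
      _ = 2 ^ ((1 : ℝ) / 2) * 2 + (4 * c ^ ((3 : ℝ) / 2)) * (Real.sqrt Real.pi / 2) := by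
          rw [integral_add ((int_exp_pow 2).const_mul _)
            ((int_exp_rpow (by norm_num : (-1 : ℝ) < 1 / 2)).const_mul _),
            integral_const_mul, integral_const_mul, integral_exp_t2, integral_exp_sqrt]
  -- final computation
  rw [hval]
  have hnormval : ‖-(E * (IB + ξ * IA)) / ξ ^ 3‖ =
      Real.exp (-ξ.re) * ‖IB + ξ * IA‖ / c ^ 3 := by
    rw [norm_div, norm_neg, norm_mul, norm_pow]
    rw [hE, Complex.norm_exp]
    simp [hc]
  rw [hnormval]
  have hstep : Real.exp (-ξ.re) * ‖IB + ξ * IA‖ / c ^ 3 ≤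
      Real.exp (-ξ.re) * (2 ^ ((1 : ℝ) / 2) * 2 + (4 * c ^ ((3 : ℝ) / 2)) *
        (Real.sqrt Real.pi / 2)) / c ^ 3 := by
    have := Real.exp_pos (-ξ.re)
    gcongr
  refine hstep.trans (le_of_eq ?_)
  have e4 : (2 : ℝ) ^ ((1 : ℝ) / 2) * 2 = 2 ^ ((3 : ℝ) / 2) := by
    rw [show (2 : ℝ) ^ ((1:ℝ)/2) * 2 = 2 ^ ((1:ℝ)/2) * 2 ^ ((1:ℝ)) by rw [Real.rpow_one],
      ← Real.rpow_add (by norm_num : (0:ℝ) < 2)]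
    norm_num
  have e5 : c ^ ((3 : ℝ) / 2) / c ^ 3 = c ^ (-(3 : ℝ) / 2) := by
    rw [← Real.rpow_natCast c 3, ← Real.rpow_sub hcpos]
    congr 1
    norm_num
  have e6 : ((2 : ℝ) ^ ((3 : ℝ) / 2) + 2 * Real.sqrt Real.pi * c ^ ((3 : ℝ) / 2)) / c ^ 3
      = 2 ^ ((3 : ℝ) / 2) / c ^ 3 + 2 * Real.sqrt Real.pi * c ^ (-(3 : ℝ) / 2) := by
    rw [add_div, ← e5]
    ring
  rw [show (2 : ℝ) ^ ((1 : ℝ) / 2) * 2 + 4 * c ^ ((3 : ℝ) / 2) * (Real.sqrt Real.pi / 2)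
    = 2 ^ ((3 : ℝ) / 2) + 2 * Real.sqrt Real.pi * c ^ ((3 : ℝ) / 2) by rw [← e4]; ring]
  rw [mul_div_assoc, e6]
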